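/- Let g₁, g₂ ≥ 2 and k₁, k₂ ≥ 1. Then: (1) π₁(Σ_{g₁}) × ℤ^{k₁} is not isomorphic to F_{g₂} × ℤ^{k₂}; (2) π₁(Σ_{g₁}) × ℤ^{k₁} ≅ π₁(Σ_{g₂}) × ℤ^{k₂} if and only if g₁ = g₂ and k₁ = k₂; (3) F_{g₁} × ℤ^{k₁} ≅ F_{g₂} × ℤ^{k₂} if and only if g₁ = g₂ and k₁ = k₂; (4) rk(π₁(Σ_g) × ℤ^k) = 2g + k and rk(F_g × ℤ^k) = g + k for all g, k ≥ 0. -/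

import Mathlib

def fixedSubgroup {G : Type*} [Group G] (φ : G →* G) : Subgroup G where
  carrier := {x | φ x = x}
  one_mem' := by simp
  mul_mem' := by
    intro a b ha hb
    simp only [Set.mem_setOf_eq, map_mul] at *
    rw [ha, hb]
  inv_mem' := by
    intro a ha
    simp only [Set.mem_setOf_eq, map_inv] at *
    rw [ha]

open scoped commutatorElement in
/-- The surface group π₁(Σ_g) = ⟨a₁,b₁,…,a_g,b_g ∣ [a₁,b₁]⋯[a_g,b_g] = 1⟩,
with generators `(i, true) = aᵢ` and `(i, false) = bᵢ`. -/
abbrev SurfaceGroup (g : ℕ) : Type :=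
  PresentedGroup
    ({(List.ofFn fun i : Fin g =>
        ⁅FreeGroup.of (i, true), FreeGroup.of (i, false)⁆).prod} :
      Set (FreeGroup (Fin g × Bool)))

/-- The rank of a group: the minimal cardinality of a generating set. -/
noncomputable def grpRank (G : Type*) [Group G] : Cardinal :=
  ⨅ S : {S : Set G // Subgroup.closure S = ⊤}, Cardinal.mk S.1

/-!
Homomorphism counts into finite groups tell these groups apart. There are `2 ^ r` homomorphisms
into `ℤ/2`, with `r = 2g + k` resp. `g + k`; this determines `r`, and bounds the rank from below
because a homomorphism is determined by its values on a generating set. A homomorphism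
`G × ℤ → S₃` is an element `σ ∈ S₃` together with a homomorphism from `G` into the centralizer
of `σ`, which is `S₃`, `ℤ/2` or `ℤ/3`. Hence the defect
`|Hom(G, S₃)| - 3 |Hom(G, ℤ/2)| - |Hom(G, ℤ/3)|` is unchanged by `G ↦ G × ℤ`. For `F_g` it is
`6^g - 3·2^g - 3^g`, and for `π₁(Σ_g)` it is `(36^g - 9^g - 9·4^g) / 3`, by counting the
solutions of `[a₁,b₁]⋯[a_g,b_g] = z` in `S₃` one handle at a time. Both are strictly increasing
for `g ≥ 1`, and for `g ≥ 2` the surface value lies strictly between the free values at `2g - 1`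
and `2g`.
-/

universe u

open Finset Multiplicative
open Equiv (Perm)
open scoped commutatorElement

local notation "S₃" => Equiv.Perm (Fin 3)

instance MonoidHom.finite_of_fg {G H : Type*} [Group G] [Group H] [Group.FG G] [Finite H] :
    Finite (G →* H) := by
  obtain ⟨S, hS⟩ := Group.FG.out (G := G)
  exact Finite.of_injective (fun φ : G →* H => fun x : S => φ x)
    fun φ ψ h => MonoidHom.eq_of_eqOn_dense hS fun x hx => congrFun h ⟨x, hx⟩

instance PresentedGroup.fg {α : Type*} [Finite α] (rels : Set (FreeGroup α)) :
    Group.FG (PresentedGroup rels) :=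
  Group.fg_of_surjective (PresentedGroup.mk_surjective rels)

def PresentedGroup.homEquiv {α : Type*} (rels : Set (FreeGroup α)) (H : Type*) [Group H] :
    (PresentedGroup rels →* H) ≃ {f : α → H // ∀ r ∈ rels, FreeGroup.lift f r = 1} where
  toFun φ := ⟨fun x => φ (PresentedGroup.of x), fun r hr => by
    have hlift :
        FreeGroup.lift (fun x => φ (PresentedGroup.of x)) = φ.comp (PresentedGroup.mk rels) :=
      FreeGroup.ext_hom _ _ fun x => by simp [PresentedGroup.of]
    rw [hlift, MonoidHom.comp_apply, PresentedGroup.one_of_mem hr, map_one]⟩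
  invFun f := PresentedGroup.toGroup f.2
  left_inv φ := PresentedGroup.ext fun x => PresentedGroup.toGroup.of _
  right_inv f := Subtype.ext (funext fun x => PresentedGroup.toGroup.of _)

section ProdInt

variable {G H : Type*} [Group G] [Group H]

def monoidHomProdIntFiberEquiv (h : H) :
    {φ : G × Multiplicative ℤ →* H // φ (1, ofAdd 1) = h} ≃ (G →* Subgroup.centralizer {h}) where
  toFun φ := (φ.1.comp (MonoidHom.inl _ _)).codRestrict _ fun a => by
    obtain ⟨φ, rfl⟩ := φ
    have hcomm : Commute ((a, 1) : G × Multiplicative ℤ) (1, ofAdd 1) := by ext <;> simp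
    exact Subgroup.mem_centralizer_singleton_iff.2 (hcomm.map φ).eq
  invFun θ := by
    refine ⟨MonoidHom.noncommCoprod ((Subgroup.subtype _).comp θ) (zpowersHom H h)
      fun a n => ?_, by simp⟩
    rw [MonoidHom.comp_apply, Subgroup.coe_subtype, zpowersHom_apply]
    exact ((commute_iff_eq _ _).2 (Subgroup.mem_centralizer_singleton_iff.1 (θ a).2)).zpow_right _
  left_inv φ := by
    refine Subtype.ext (MonoidHom.ext fun x => ?_)
    have hinr : φ.1.comp (MonoidHom.inr _ _) = zpowersHom H h :=
      MonoidHom.ext_mint (by simpa using φ.2)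
    simp only [MonoidHom.noncommCoprod_apply, MonoidHom.comp_apply, Subgroup.coe_subtype,
      MonoidHom.codRestrict_apply, MonoidHom.inl_apply, ← hinr, MonoidHom.inr_apply, ← map_mul,
      Prod.mk_mul_mk, mul_one, one_mul]
  right_inv θ := by
    ext a
    simp

theorem card_monoidHom_prod_int [Group.FG G] [Fintype H] :
    Nat.card (G × Multiplicative ℤ →* H) =
      ∑ h : H, Nat.card (G →* Subgroup.centralizer {h}) := by
  rw [← Nat.card_congr
      (Equiv.sigmaFiberEquiv fun φ : G × Multiplicative ℤ →* H => φ (1, ofAdd 1)),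
    Nat.card_sigma]
  exact Finset.sum_congr rfl fun h _ => Nat.card_congr (monoidHomProdIntFiberEquiv h)

theorem card_monoidHom_centralizer_of_mem_center {h : H} (hh : h ∈ Subgroup.center H) :
    Nat.card (G →* Subgroup.centralizer {h}) = Nat.card (G →* H) :=
  Nat.card_congr ((MulEquiv.subgroupCongr (Subgroup.centralizer_eq_top_iff_subset.2
    (Set.singleton_subset_iff.2 hh))).trans Subgroup.topEquiv).monoidHomCongrRightEquiv

theorem card_monoidHom_prod_int_of_comm [Group.FG G] {K : Type*} [CommGroup K] [Fintype K] :
    Nat.card (G × Multiplicative ℤ →* K) = Nat.card K * Nat.card (G →* K) := by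
  rw [card_monoidHom_prod_int, Fintype.sum_congr _ _ fun h =>
      card_monoidHom_centralizer_of_mem_center (Subgroup.mem_center_iff.2 fun y => mul_comm y h),
    sum_const, card_univ, smul_eq_mul, ← Nat.card_eq_fintype_card]

end ProdInt

theorem card_centralizer_perm_three {σ : S₃} (hσ : σ ≠ 1) :
    Nat.card (Subgroup.centralizer {σ}) = if Perm.sign σ = 1 then 3 else 2 := by
  rw [Nat.card_congr (Equiv.subtypeEquivRight fun τ => Subgroup.mem_centralizer_singleton_iff),
    Nat.card_eq_fintype_card]
  revert σ
  decide

theorem card_monoidHom_eq_of_card_eq_prime {G C : Type*} [Group G] [Group C] {p : ℕ}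
    [Fact p.Prime] (hC : Nat.card C = p) :
    Nat.card (G →* C) = Nat.card (G →* Multiplicative (ZMod p)) :=
  Nat.card_congr (mulEquivOfPrimeCardEq hC (by simp)).monoidHomCongrRightEquiv

theorem card_monoidHom_prod_int_perm_three {G : Type*} [Group G] [Group.FG G] :
    Nat.card (G × Multiplicative ℤ →* S₃) = Nat.card (G →* S₃)
      + 3 * Nat.card (G →* Multiplicative (ZMod 2))
      + 2 * Nat.card (G →* Multiplicative (ZMod 3)) := by
  have hne (σ : S₃) (hσ : σ ∈ ({1}ᶜ : Finset S₃)) :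
      Nat.card (G →* Subgroup.centralizer {σ}) = if Perm.sign σ = 1
        then Nat.card (G →* Multiplicative (ZMod 3))
        else Nat.card (G →* Multiplicative (ZMod 2)) := by
    have hcard := card_centralizer_perm_three (by simpa using hσ)
    split_ifs at hcard ⊢
    · exact card_monoidHom_eq_of_card_eq_prime hcard
    · exact card_monoidHom_eq_of_card_eq_prime hcard
  have heven : #(({1}ᶜ : Finset S₃).filter fun σ => Perm.sign σ = 1) = 2 := by decide
  have hodd : #(({1}ᶜ : Finset S₃).filter fun σ => ¬Perm.sign σ = 1) = 3 := by decide
  rw [card_monoidHom_prod_int, Fintype.sum_eq_add_sum_compl 1,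
    card_monoidHom_centralizer_of_mem_center (Subgroup.one_mem _), Finset.sum_congr rfl hne,
    Finset.sum_ite, sum_const, sum_const, smul_eq_mul, smul_eq_mul, heven, hodd]
  ring

noncomputable def s3Defect (G : Type*) [Group G] : ℤ :=
  Nat.card (G →* S₃) - 3 * Nat.card (G →* Multiplicative (ZMod 2))
    - Nat.card (G →* Multiplicative (ZMod 3))

theorem s3Defect_congr {G G' : Type*} [Group G] [Group G'] (e : G ≃* G') :
    s3Defect G = s3Defect G' := by
  simp only [s3Defect, Nat.card_congr e.monoidHomCongrLeftEquiv]

theorem s3Defect_prod_int (G : Type*) [Group G] [Group.FG G] :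
    s3Defect (G × Multiplicative ℤ) = s3Defect G := by
  rw [s3Defect, s3Defect, card_monoidHom_prod_int_perm_three, card_monoidHom_prod_int_of_comm,
    card_monoidHom_prod_int_of_comm]
  simp only [Nat.cast_add, Nat.cast_mul, Nat.cast_ofNat, Nat.card_eq_fintype_card,
    Fintype.card_multiplicative, ZMod.card]
  ring

def prodPiIntSuccEquiv (G : Type*) [Group G] (k : ℕ) :
    G × Multiplicative (Fin (k + 1) → ℤ) ≃* (G × Multiplicative (Fin k → ℤ)) × Multiplicative ℤ :=
  ((MulEquiv.refl G).prodCongr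
    (((AddEquiv.toMultiplicative (Fin.consLinearEquiv ℤ fun _ => ℤ).toAddEquiv).symm.trans
      (MulEquiv.prodMultiplicative ℤ (Fin k → ℤ))).trans MulEquiv.prodComm)).trans
    MulEquiv.prodAssoc.symm

theorem s3Defect_prod_pi_int (G : Type*) [Group G] [Group.FG G] (k : ℕ) :
    s3Defect (G × Multiplicative (Fin k → ℤ)) = s3Defect G := by
  induction k with
  | zero => exact s3Defect_congr MulEquiv.prodUnique
  | succ k ih => rw [s3Defect_congr (prodPiIntSuccEquiv G k), s3Defect_prod_int, ih]

theorem card_monoidHom_prod_pi_int_of_comm (G : Type*) [Group G] [Group.FG G] {K : Type*}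
    [CommGroup K] [Fintype K] (k : ℕ) :
    Nat.card (G × Multiplicative (Fin k → ℤ) →* K) = Nat.card K ^ k * Nat.card (G →* K) := by
  induction k with
  | zero => rw [Nat.card_congr MulEquiv.prodUnique.monoidHomCongrLeftEquiv, pow_zero, one_mul]
  | succ k ih =>
    rw [Nat.card_congr (prodPiIntSuccEquiv G k).monoidHomCongrLeftEquiv,
      card_monoidHom_prod_int_of_comm, ih, pow_succ, mul_comm _ (Nat.card K), mul_assoc]

section SurfaceWord

variable {H : Type*} [Group H]

def surfaceWord {g : ℕ} (v : Fin g → H × H) : H :=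
  (List.ofFn fun i => ⁅(v i).1, (v i).2⁆).prod

theorem surfaceWord_cons {g : ℕ} (p : H × H) (v : Fin g → H × H) :
    surfaceWord (Fin.cons p v : Fin (g + 1) → H × H) = ⁅p.1, p.2⁆ * surfaceWord v := by
  simp [surfaceWord, List.ofFn_succ]

theorem surfaceWord_eq_one {K : Type*} [CommGroup K] {g : ℕ} (v : Fin g → K × K) :
    surfaceWord v = 1 :=
  List.prod_eq_one (by simp [List.mem_ofFn, commutatorElement_eq_one_iff_mul_comm, mul_comm])

theorem card_surfaceWord_succ [Fintype H] [DecidableEq H] (g : ℕ) (z : H) :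
    #{v : Fin (g + 1) → H × H | surfaceWord v = z} =
      ∑ p : H × H, #{v : Fin g → H × H | surfaceWord v = ⁅p.1, p.2⁆⁻¹ * z} := by
  simp only [card_filter]
  rw [← (Fin.consEquiv fun _ => H × H).sum_comp, Fintype.sum_prod_type]
  simp only [Fin.consEquiv, Equiv.coe_fn_mk, surfaceWord_cons, eq_inv_mul_iff_mul_eq]

end SurfaceWord

def surfaceGroupHomEquiv (g : ℕ) (H : Type*) [Group H] :
    (SurfaceGroup g →* H) ≃ {v : Fin g → H × H // surfaceWord v = 1} :=
  (PresentedGroup.homEquiv _ H).trans <| Equiv.subtypeEquiv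
    ((Equiv.curry _ _ _).trans (Equiv.arrowCongr (Equiv.refl _)
      ((Equiv.boolArrowEquivProd H).trans (Equiv.prodComm _ _)))) fun f => by
    simp [surfaceWord, map_list_prod, List.map_ofFn, Function.comp_def]

theorem card_monoidHom_surfaceGroup_of_comm (g : ℕ) (K : Type*) [CommGroup K] :
    Nat.card (SurfaceGroup g →* K) = Nat.card K ^ (2 * g) := by
  rw [Nat.card_congr
      ((surfaceGroupHomEquiv g K).trans (Equiv.subtypeUnivEquiv surfaceWord_eq_one)),
    Nat.card_fun, Nat.card_prod, Nat.card_fin, ← sq, ← pow_mul]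

theorem card_commutator_eq_perm_three (z : S₃) :
    #{p : S₃ × S₃ | ⁅p.1, p.2⁆ = z} =
      9 * ((if Perm.sign z = 1 then 1 else 0) + if z = 1 then 1 else 0) := by
  revert z
  decide

theorem card_surfaceWord_perm_three (g : ℕ) (z : S₃) :
    (3 * #{v : Fin g → S₃ × S₃ | surfaceWord v = z} : ℤ) =
      (if Perm.sign z = 1 then 36 ^ g - 9 ^ g else 0) + if z = 1 then 3 * 9 ^ g else 0 := by
  induction g generalizing z with
  | zero =>
    revert z
    decide
  | succ g ih =>
    have hsign (p : S₃ × S₃) : Perm.sign (⁅p.1, p.2⁆⁻¹ * z) = Perm.sign z := by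
      rw [map_mul, map_inv, map_commutatorElement,
        commutatorElement_eq_one_iff_mul_comm.2 (mul_comm _ _), inv_one, one_mul]
    rw [card_surfaceWord_succ]
    push_cast
    simp_rw [mul_sum, ih, hsign, inv_mul_eq_one]
    rw [sum_add_distrib, sum_const, Finset.sum_ite, sum_const_zero, add_zero, sum_const,
      card_univ, card_commutator_eq_perm_three, nsmul_eq_mul, nsmul_eq_mul,
      show Fintype.card (S₃ × S₃) = 36 by decide]
    split_ifs <;> push_cast <;> ring

theorem card_monoidHom_surfaceGroup_perm_three (g : ℕ) :
    (3 * Nat.card (SurfaceGroup g →* S₃) : ℤ) = 36 ^ g + 2 * 9 ^ g := by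
  rw [Nat.card_congr (surfaceGroupHomEquiv g S₃), Nat.card_eq_fintype_card, Fintype.card_subtype,
    card_surfaceWord_perm_three]
  simp only [Equiv.Perm.sign_one, ↓reduceIte]
  ring

theorem s3Defect_surfaceGroup (g : ℕ) :
    3 * s3Defect (SurfaceGroup g) = 36 ^ g - 9 ^ g - 9 * 4 ^ g := by
  have hS₃ := card_monoidHom_surfaceGroup_perm_three g
  rw [s3Defect, card_monoidHom_surfaceGroup_of_comm, card_monoidHom_surfaceGroup_of_comm]
  simp only [Nat.card_eq_fintype_card, Fintype.card_multiplicative, ZMod.card, pow_mul]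
  push_cast
  linear_combination hS₃

theorem card_monoidHom_freeGroup (g : ℕ) (H : Type*) [Group H] :
    Nat.card (FreeGroup (Fin g) →* H) = Nat.card H ^ g := by
  rw [← Nat.card_congr FreeGroup.lift, Nat.card_fun, Nat.card_fin]

theorem s3Defect_freeGroup (g : ℕ) :
    s3Defect (FreeGroup (Fin g)) = 6 ^ g - 3 * 2 ^ g - 3 ^ g := by
  simp only [s3Defect, card_monoidHom_freeGroup, Nat.card_eq_fintype_card,
    Fintype.card_multiplicative, ZMod.card, Fintype.card_perm, Fintype.card_fin]
  norm_num [Nat.factorial]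

theorem strictMonoOn_s3Defect_freeGroup :
    StrictMonoOn (fun n => s3Defect (FreeGroup (Fin n))) (Set.Ici 1) :=
  strictMonoOn_of_lt_succ Set.ordConnected_Ici fun n _ hn _ => by
    have h36 : (3 : ℤ) ^ n < 6 ^ n :=
      pow_lt_pow_left₀ (by norm_num) (by norm_num) (Nat.one_le_iff_ne_zero.1 hn)
    have h23 : (2 : ℤ) ^ n ≤ 3 ^ n := pow_le_pow_left₀ (by norm_num) (by norm_num) n
    rw [Order.succ_eq_add_one, s3Defect_freeGroup, s3Defect_freeGroup, pow_succ, pow_succ,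
      pow_succ]
    linarith

theorem strictMonoOn_s3Defect_surfaceGroup :
    StrictMonoOn (fun n => s3Defect (SurfaceGroup n)) (Set.Ici 1) :=
  strictMonoOn_of_lt_succ Set.ordConnected_Ici fun n _ hn _ => by
    have h936 : (9 : ℤ) ^ n < 36 ^ n :=
      pow_lt_pow_left₀ (by norm_num) (by norm_num) (Nat.one_le_iff_ne_zero.1 hn)
    have h49 : (4 : ℤ) ^ n ≤ 9 ^ n := pow_le_pow_left₀ (by norm_num) (by norm_num) n
    have hn₀ := s3Defect_surfaceGroup n
    have hn₁ := s3Defect_surfaceGroup (n + 1)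
    rw [pow_succ, pow_succ, pow_succ] at hn₁
    rw [Order.succ_eq_add_one]
    linarith

theorem s3Defect_surfaceGroup_ne_freeGroup {g h : ℕ} (hg : 2 ≤ g) (hh : 1 ≤ h) :
    s3Defect (SurfaceGroup g) ≠ s3Defect (FreeGroup (Fin h)) := by
  obtain ⟨j, rfl⟩ : ∃ j, g = j + 1 := ⟨g - 1, by omega⟩
  have hsq (a : ℤ) (n : ℕ) : a ^ (2 * n) = (a ^ 2) ^ n := pow_mul a 2 n
  have h436 : (4 : ℤ) ^ j < 36 ^ j := pow_lt_pow_left₀ (by norm_num) (by norm_num) (by omega)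
  have h936 : (9 : ℤ) ^ j ≤ 36 ^ j := pow_le_pow_left₀ (by norm_num) (by norm_num) j
  have h9 : (0 : ℤ) < 9 ^ j := by positivity
  have hS := s3Defect_surfaceGroup (j + 1)
  have hbelow :
      3 * s3Defect (FreeGroup (Fin (2 * j + 1))) < 3 * s3Defect (SurfaceGroup (j + 1)) := by
    rw [hS, s3Defect_freeGroup]
    simp only [pow_succ, hsq]
    norm_num
    linarith
  have habove :
      3 * s3Defect (SurfaceGroup (j + 1)) < 3 * s3Defect (FreeGroup (Fin (2 * j + 2))) := by
    rw [hS, s3Defect_freeGroup]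
    simp only [show 2 * j + 2 = 2 * (j + 1) by ring, hsq, pow_succ]
    norm_num
    linarith
  intro heq
  rcases le_or_gt h (2 * j + 1) with hle | hlt
  · have := strictMonoOn_s3Defect_freeGroup.monotoneOn hh (by simp) hle
    linarith
  · have := strictMonoOn_s3Defect_freeGroup.monotoneOn (by simp) hh
      (show 2 * j + 2 ≤ h by omega)
    linarith

theorem card_monoidHom_surfaceGroup_prod_pi_int_of_comm (g k : ℕ) (K : Type*) [CommGroup K]
    [Fintype K] :
    Nat.card (SurfaceGroup g × Multiplicative (Fin k → ℤ) →* K) = Nat.card K ^ (2 * g + k) := by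
  rw [card_monoidHom_prod_pi_int_of_comm, card_monoidHom_surfaceGroup_of_comm, ← pow_add,
    add_comm k]

theorem card_monoidHom_freeGroup_prod_pi_int_of_comm (g k : ℕ) (K : Type*) [CommGroup K]
    [Fintype K] :
    Nat.card (FreeGroup (Fin g) × Multiplicative (Fin k → ℤ) →* K) = Nat.card K ^ (g + k) := by
  rw [card_monoidHom_prod_pi_int_of_comm, card_monoidHom_freeGroup, ← pow_add, add_comm k]

theorem isEmpty_surfaceGroup_prod_mulEquiv_freeGroup_prod {g₁ g₂ : ℕ} (hg₁ : 2 ≤ g₁)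
    (hg₂ : 1 ≤ g₂) (k₁ k₂ : ℕ) :
    IsEmpty ((SurfaceGroup g₁ × Multiplicative (Fin k₁ → ℤ)) ≃*
      (FreeGroup (Fin g₂) × Multiplicative (Fin k₂ → ℤ))) := by
  refine ⟨fun e => s3Defect_surfaceGroup_ne_freeGroup hg₁ hg₂ ?_⟩
  simpa only [s3Defect_prod_pi_int] using s3Defect_congr e

theorem surfaceGroup_prod_mulEquiv_iff {g₁ g₂ k₁ k₂ : ℕ} (hg₁ : 1 ≤ g₁) (hg₂ : 1 ≤ g₂) :
    Nonempty ((SurfaceGroup g₁ × Multiplicative (Fin k₁ → ℤ)) ≃*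
      (SurfaceGroup g₂ × Multiplicative (Fin k₂ → ℤ))) ↔ g₁ = g₂ ∧ k₁ = k₂ := by
  refine ⟨fun ⟨e⟩ => ?_, fun ⟨hg, hk⟩ => hg ▸ hk ▸ ⟨MulEquiv.refl _⟩⟩
  have hdef := s3Defect_congr e
  simp only [s3Defect_prod_pi_int] at hdef
  have hcard := Nat.card_congr (e.monoidHomCongrLeftEquiv (N := Multiplicative (ZMod 2)))
  simp only [card_monoidHom_surfaceGroup_prod_pi_int_of_comm, Nat.card_eq_fintype_card,
    Fintype.card_multiplicative, ZMod.card] at hcard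
  have hrank := Nat.pow_right_injective le_rfl hcard
  have hg := strictMonoOn_s3Defect_surfaceGroup.injOn hg₁ hg₂ hdef
  omega

theorem freeGroup_prod_mulEquiv_iff {g₁ g₂ k₁ k₂ : ℕ} (hg₁ : 1 ≤ g₁) (hg₂ : 1 ≤ g₂) :
    Nonempty ((FreeGroup (Fin g₁) × Multiplicative (Fin k₁ → ℤ)) ≃*
      (FreeGroup (Fin g₂) × Multiplicative (Fin k₂ → ℤ))) ↔ g₁ = g₂ ∧ k₁ = k₂ := by
  refine ⟨fun ⟨e⟩ => ?_, fun ⟨hg, hk⟩ => hg ▸ hk ▸ ⟨MulEquiv.refl _⟩⟩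
  have hdef := s3Defect_congr e
  simp only [s3Defect_prod_pi_int] at hdef
  have hcard := Nat.card_congr (e.monoidHomCongrLeftEquiv (N := Multiplicative (ZMod 2)))
  simp only [card_monoidHom_freeGroup_prod_pi_int_of_comm, Nat.card_eq_fintype_card,
    Fintype.card_multiplicative, ZMod.card] at hcard
  have hrank := Nat.pow_right_injective le_rfl hcard
  have hg := strictMonoOn_s3Defect_freeGroup.injOn hg₁ hg₂ hdef
  omega

section Rank

open Cardinal

theorem grpRank_le_mk {G : Type*} [Group G] {S : Set G} (hS : Subgroup.closure S = ⊤) :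
    grpRank G ≤ #S :=
  ciInf_le' (fun S : {S : Set G // Subgroup.closure S = ⊤} => #S.1) ⟨S, hS⟩

theorem le_grpRank_of_card_monoidHom_eq_two_pow {G : Type*} [Group G] {n : ℕ}
    (h : Nat.card (G →* Multiplicative (ZMod 2)) = 2 ^ n) : (n : Cardinal) ≤ grpRank G := by
  have : Nonempty {S : Set G // Subgroup.closure S = ⊤} := ⟨⟨Set.univ, Subgroup.closure_univ⟩⟩
  refine le_ciInf fun ⟨S, hS⟩ => ?_
  rcases finite_or_infinite S with hfin | hinf
  · have hinj : Function.Injective fun φ : G →* Multiplicative (ZMod 2) => fun x : S => φ x :=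
      fun φ ψ hφψ => MonoidHom.eq_of_eqOn_dense hS fun x hx => congrFun hφψ ⟨x, hx⟩
    have hle := Nat.card_le_card_of_injective _ hinj
    rw [h, Nat.card_fun, Nat.card_eq_fintype_card (α := Multiplicative (ZMod 2)),
      Fintype.card_multiplicative, ZMod.card, Nat.pow_le_pow_iff_right one_lt_two] at hle
    rw [← Nat.cast_card]
    exact_mod_cast hle
  · exact (natCast_lt_aleph0 (n := n)).le.trans (aleph0_le_mk S)

theorem closure_image_inl_union_image_inr {G H : Type*} [Group G] [Group H] {S : Set G}
    {T : Set H} (hS : Subgroup.closure S = ⊤) (hT : Subgroup.closure T = ⊤) :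
    Subgroup.closure (MonoidHom.inl G H '' S ∪ MonoidHom.inr G H '' T) = ⊤ := by
  rw [eq_top_iff, ← Subgroup.top_prod_top, Subgroup.prod_le_iff, ← hS, ← hT,
    MonoidHom.map_closure, MonoidHom.map_closure]
  exact ⟨Subgroup.closure_mono Set.subset_union_left,
    Subgroup.closure_mono Set.subset_union_right⟩

theorem grpRank_prod_le {G H : Type u} [Group G] [Group H] {S : Set G} {T : Set H}
    (hS : Subgroup.closure S = ⊤) (hT : Subgroup.closure T = ⊤) :
    grpRank (G × H) ≤ #S + #T :=
  (grpRank_le_mk (closure_image_inl_union_image_inr hS hT)).trans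
    ((mk_union_le _ _).trans (add_le_add mk_image_le mk_image_le))

theorem closure_range_ofAdd_single (k : ℕ) :
    Subgroup.closure (Set.range fun i : Fin k => ofAdd (Pi.single i (1 : ℤ))) = ⊤ := by
  refine eq_top_iff.2 fun v _ => ?_
  have hv : v = ∏ i, ofAdd (Pi.single i (1 : ℤ)) ^ toAdd v i := by
    apply toAdd.injective
    simp only [toAdd_prod, toAdd_zpow, toAdd_ofAdd, ← Pi.single_smul, smul_eq_mul, mul_one,
      Finset.univ_sum_single]
  rw [hv]
  exact Subgroup.prod_mem _ fun i _ =>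
    Subgroup.zpow_mem _ (Subgroup.subset_closure (Set.mem_range_self i)) _

theorem grpRank_surfaceGroup_prod (g k : ℕ) :
    grpRank (SurfaceGroup g × Multiplicative (Fin k → ℤ)) = ((2 * g + k : ℕ) : Cardinal) := by
  refine le_antisymm ?_ (le_grpRank_of_card_monoidHom_eq_two_pow ?_)
  · calc _ ≤ _ := grpRank_prod_le (PresentedGroup.closure_range_of _) (closure_range_ofAdd_single k)
      _ ≤ #(Fin g × Bool) + #(Fin k) := add_le_add mk_range_le mk_range_le
      _ = _ := by simp [mul_comm]
  · simp [card_monoidHom_surfaceGroup_prod_pi_int_of_comm]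

theorem grpRank_freeGroup_prod (g k : ℕ) :
    grpRank (FreeGroup (Fin g) × Multiplicative (Fin k → ℤ)) = ((g + k : ℕ) : Cardinal) := by
  refine le_antisymm ?_ (le_grpRank_of_card_monoidHom_eq_two_pow ?_)
  · calc _ ≤ _ := grpRank_prod_le (FreeGroup.closure_range_of _) (closure_range_ofAdd_single k)
      _ ≤ #(Fin g) + #(Fin k) := add_le_add mk_range_le mk_range_le
      _ = _ := by simp
  · simp [card_monoidHom_freeGroup_prod_pi_int_of_comm]

end Rank

theorem stmt10_general (g₁ g₂ k₁ k₂ : ℕ) (hg₁ : 2 ≤ g₁) (hg₂ : 2 ≤ g₂) :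
    IsEmpty ((SurfaceGroup g₁ × Multiplicative (Fin k₁ → ℤ)) ≃*
        (FreeGroup (Fin g₂) × Multiplicative (Fin k₂ → ℤ))) ∧
    (Nonempty ((SurfaceGroup g₁ × Multiplicative (Fin k₁ → ℤ)) ≃*
        (SurfaceGroup g₂ × Multiplicative (Fin k₂ → ℤ))) ↔ (g₁ = g₂ ∧ k₁ = k₂)) ∧
    (Nonempty ((FreeGroup (Fin g₁) × Multiplicative (Fin k₁ → ℤ)) ≃*
        (FreeGroup (Fin g₂) × Multiplicative (Fin k₂ → ℤ))) ↔ (g₁ = g₂ ∧ k₁ = k₂)) ∧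
    (∀ g k : ℕ,
      grpRank (SurfaceGroup g × Multiplicative (Fin k → ℤ)) = ((2 * g + k : ℕ) : Cardinal) ∧
      grpRank (FreeGroup (Fin g) × Multiplicative (Fin k → ℤ)) = ((g + k : ℕ) : Cardinal)) :=
  ⟨isEmpty_surfaceGroup_prod_mulEquiv_freeGroup_prod hg₁ (by omega) k₁ k₂,
    surfaceGroup_prod_mulEquiv_iff (by omega) (by omega),
    freeGroup_prod_mulEquiv_iff (by omega) (by omega),
    fun g k => ⟨grpRank_surfaceGroup_prod g k, grpRank_freeGroup_prod g k⟩⟩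

theorem stmt10 (g₁ g₂ k₁ k₂ : ℕ) (hg₁ : 2 ≤ g₁) (hg₂ : 2 ≤ g₂)
    (hk₁ : 1 ≤ k₁) (hk₂ : 1 ≤ k₂) :
    IsEmpty ((SurfaceGroup g₁ × Multiplicative (Fin k₁ → ℤ)) ≃*
        (FreeGroup (Fin g₂) × Multiplicative (Fin k₂ → ℤ))) ∧
    (Nonempty ((SurfaceGroup g₁ × Multiplicative (Fin k₁ → ℤ)) ≃*
        (SurfaceGroup g₂ × Multiplicative (Fin k₂ → ℤ))) ↔ (g₁ = g₂ ∧ k₁ = k₂)) ∧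
    (Nonempty ((FreeGroup (Fin g₁) × Multiplicative (Fin k₁ → ℤ)) ≃*
        (FreeGroup (Fin g₂) × Multiplicative (Fin k₂ → ℤ))) ↔ (g₁ = g₂ ∧ k₁ = k₂)) ∧
    (∀ g k : ℕ,
      grpRank (SurfaceGroup g × Multiplicative (Fin k → ℤ)) = ((2 * g + k : ℕ) : Cardinal) ∧
      grpRank (FreeGroup (Fin g) × Multiplicative (Fin k → ℤ)) = ((g + k : ℕ) : Cardinal)) :=
  stmt10_general g₁ g₂ k₁ k₂ hg₁ hg₂
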